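/- Under the Fourier transform unitary U : ℓ²(ℤ^d) ⊗ ⋀*ℂ^d → L²(⋀*T*𝕋^d) sending |k⟩ ⊗ e_{i_1} ∧ … ∧ e_{i_l} to (z^k / (z_{i_1}⋯z_{i_l})) dz_{i_1} ∧ … ∧ dz_{i_l}, the de Rham differential d corresponds to the operator Σ_{j=1}^d X_j ⊗ λ_j, where X_j is the j-th position operator on ℓ²(ℤ^d); hence the Hodge–de Rham operator d + d* is unitarily equivalent to Σ_{j=1}^d X_j ⊗ (λ_j + λ_j*). -/
import Mathlib


noncomputable section

open Real Complex

/-- Differential forms on the torus `𝕋^d` (in the angular coordinates `x`, with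
`z_j = exp(2πi x_j)`), written in components: a form `ω = Σ_S ω_S dx_S` is the family of
its coefficient functions `ω_S : ℝ^d → ℂ` (which are `ℤ^d`-periodic for genuine forms on
the torus), indexed by finite subsets `S ⊆ {1, …, d}`. -/
abbrev TorusForms (d : ℕ) := Finset (Fin d) → ((Fin d → ℝ) → ℂ)

/-- The partial derivative in the `j`-th coordinate direction. -/
def pderivCoord {d : ℕ} (j : Fin d) (f : (Fin d → ℝ) → ℂ) : (Fin d → ℝ) → ℂ :=
  fun x => fderiv ℝ f x (Pi.single j 1)

/-- The sign `(-1)^{#{i ∈ S : i < j}}` of moving `dx_j` (resp. `e_j`) past `dx_S`. -/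
def wedgeSign {d : ℕ} (j : Fin d) (S : Finset (Fin d)) : ℂ :=
  (-1 : ℂ) ^ (S.filter (· < j)).card

/-- The de Rham differential on forms on the torus, in components:
`(dω)_S = Σ_{j ∈ S} ± ∂_j ω_{S \ {j}}`. -/
def deRham {d : ℕ} (ω : TorusForms d) : TorusForms d :=
  fun S => ∑ j ∈ S, wedgeSign j (S.erase j) • pderivCoord j (ω (S.erase j))

/-- The image `U(|k⟩ ⊗ e_S)` of the basis vector `|k⟩ ⊗ e_{i₁} ∧ ⋯ ∧ e_{i_l}` of
`ℓ²(ℤ^d) ⊗ ⋀*ℂ^d` under the Fourier transform unitary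
`U : ℓ²(ℤ^d) ⊗ ⋀*ℂ^d → L²(⋀*T*𝕋^d)`: the form
`(z^k / (z_{i₁} ⋯ z_{i_l})) dz_{i₁} ∧ ⋯ ∧ dz_{i_l}`, which in angular coordinates is
`(2πi)^{|S|} e^{2πi k·x} dx_S`. -/
def fourierBasisForm {d : ℕ} (k : Fin d → ℤ) (S : Finset (Fin d)) : TorusForms d :=
  fun S' x =>
    if S' = S then
      (2 * (π : ℂ) * I) ^ S.card *
        Complex.exp (2 * (π : ℂ) * I * ∑ j : Fin d, (k j : ℂ) * (x j : ℂ))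
    else 0

lemma pderiv_fourier {d : ℕ} (k : Fin d → ℤ) (C : ℂ) (j : Fin d) (x : Fin d → ℝ) :
    pderivCoord j (fun y => C * Complex.exp (2*(π:ℂ)*I * ∑ i, (k i:ℂ)*(y i:ℂ))) x
      = 2*(π:ℂ)*I*(k j:ℂ) * (C * Complex.exp (2*(π:ℂ)*I * ∑ i, (k i:ℂ)*(x i:ℂ))) := by
  set L : (Fin d → ℝ) →L[ℝ] ℂ :=
    (2*(π:ℂ)*I) • ∑ i, (k i:ℂ) • (Complex.ofRealCLM.comp (ContinuousLinearMap.proj i)) with hLdef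
  have hL : ∀ y : Fin d → ℝ, L y = 2*(π:ℂ)*I * ∑ i, (k i:ℂ)*(y i:ℂ) := by
    intro y
    simp [hLdef, ContinuousLinearMap.sum_apply, mul_comm]
  have hL1 : L (Pi.single j 1) = 2*(π:ℂ)*I*(k j:ℂ) := by
    rw [hL, Finset.sum_eq_single j]
    · simp
    · intro i _ hij; simp [Pi.single_apply, hij]
    · simp
  have hfun : (fun y => C * Complex.exp (2*(π:ℂ)*I * ∑ i, (k i:ℂ)*(y i:ℂ)))
      = fun y => C * Complex.exp (L y) := by
    funext y; rw [hL]
  have hd : HasFDerivAt (fun y => C * Complex.exp (L y))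
      (C • (Complex.exp (L x) • L)) x := by
    have h1 : HasFDerivAt (fun y => Complex.exp (L y)) (Complex.exp (L x) • L) x :=
      (Complex.hasDerivAt_exp (L x)).comp_hasFDerivAt x L.hasFDerivAt
    exact h1.const_mul C
  rw [pderivCoord, hfun, hd.fderiv]
  simp [hL1, hL x]
  ring

lemma pderiv_zero {d : ℕ} (j : Fin d) (x : Fin d → ℝ) :
    pderivCoord j (fun _ => (0:ℂ)) x = 0 := by
  simp [pderivCoord]

/-- Under the Fourier transform unitary `U : ℓ²(ℤ^d) ⊗ ⋀*ℂ^d → L²(⋀*T*𝕋^d)` sending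
`|k⟩ ⊗ e_{i₁} ∧ ⋯ ∧ e_{i_l}` to `(z^k/(z_{i₁}⋯z_{i_l})) dz_{i₁} ∧ ⋯ ∧ dz_{i_l}`, the
de Rham differential `d` corresponds to the operator `Σ_j X_j ⊗ λ_j`, where `X_j` is the
`j`-th position operator on `ℓ²(ℤ^d)` and `λ_j` is exterior multiplication by `e_j`:
on the basis vector `U(|k⟩ ⊗ e_S)` one has
`d (U(|k⟩ ⊗ e_S)) = Σ_{j ∉ S} k_j · sign(j,S) · U(|k⟩ ⊗ e_{insert j S})
                  = U ((Σ_j X_j ⊗ λ_j)(|k⟩ ⊗ e_S))`.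
Hence the Hodge–de Rham operator `d + d*` is unitarily equivalent to
`Σ_j X_j ⊗ (λ_j + λ_j*)`. -/
theorem deRham_corresponds_to_position_tensor_wedge {d : ℕ}
    (k : Fin d → ℤ) (S : Finset (Fin d)) :
    deRham (fourierBasisForm k S) =
      ∑ j ∈ Sᶜ, ((k j : ℂ) * wedgeSign j S) • fourierBasisForm k (insert j S) := by
  funext S' x
  have hRHS : (∑ j ∈ Sᶜ, ((k j : ℂ) * wedgeSign j S) • fourierBasisForm k (insert j S)) S' x
      = ∑ j ∈ Sᶜ, ((k j : ℂ) * wedgeSign j S) * fourierBasisForm k (insert j S) S' x := by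
    simp [Finset.sum_apply]
  have hLHS : deRham (fourierBasisForm k S) S' x
      = ∑ j ∈ S', wedgeSign j (S'.erase j) * pderivCoord j (fourierBasisForm k S (S'.erase j)) x := by
    simp [deRham, Finset.sum_apply]
  rw [hLHS, hRHS]
  by_cases h : ∃ j ∉ S, S' = insert j S
  · obtain ⟨j0, hj0, rfl⟩ := h
    rw [Finset.sum_eq_single_of_mem j0 (Finset.mem_insert_self j0 S),
        Finset.sum_eq_single_of_mem j0 (Finset.mem_compl.mpr hj0)]
    · have he : (insert j0 S).erase j0 = S := Finset.erase_insert hj0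
      have hfS : fourierBasisForm k S S = fun y =>
          (2 * (π : ℂ) * I) ^ S.card *
            Complex.exp (2 * (π : ℂ) * I * ∑ i, (k i : ℂ) * (y i : ℂ)) := by
        funext y; simp [fourierBasisForm]
      rw [he, hfS, pderiv_fourier]
      have hins : fourierBasisForm k (insert j0 S) (insert j0 S) x
          = (2 * (π : ℂ) * I) ^ (S.card + 1) *
            Complex.exp (2 * (π : ℂ) * I * ∑ i, (k i : ℂ) * (x i : ℂ)) := by
        simp [fourierBasisForm, Finset.card_insert_of_notMem hj0]
      rw [hins, pow_succ]
      ring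
    · intro j hj hjne
      have : insert j0 S ≠ insert j S := by
        intro hEq
        have : j ∈ insert j0 S := hEq ▸ Finset.mem_insert_self j S
        rcases Finset.mem_insert.mp this with h1 | h1
        · exact hjne h1
        · exact Finset.mem_compl.mp hj h1
      simp [fourierBasisForm, this]
    · intro j hj hjne
      have hne : (insert j0 S).erase j ≠ S := by
        intro hEq
        apply hj0
        rw [← hEq]
        exact Finset.mem_erase.mpr ⟨Ne.symm hjne, Finset.mem_insert_self j0 S⟩
      have : fourierBasisForm k S ((insert j0 S).erase j) = fun _ => (0:ℂ) := by
        funext y; simp [fourierBasisForm, hne]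
      rw [this, pderiv_zero, mul_zero]
  · rw [Finset.sum_eq_zero, Finset.sum_eq_zero]
    · intro j hj
      have : insert j S ≠ S' := by
        intro hEq
        exact h ⟨j, Finset.mem_compl.mp hj, hEq.symm⟩
      simp [fourierBasisForm, Ne.symm this]
    · intro j hj
      have hne : S'.erase j ≠ S := by
        intro hEq
        have hjS : j ∉ S := hEq ▸ Finset.notMem_erase j S'
        exact h ⟨j, hjS, by rw [← hEq, Finset.insert_erase hj]⟩
      have : fourierBasisForm k S (S'.erase j) = fun _ => (0:ℂ) := by
        funext y; simp [fourierBasisForm, hne]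
      rw [this, pderiv_zero, mul_zero]
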